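/- arXiv:2401.04899 — 4 statements merged into one kernel-verified Lean document; each statement's English description precedes it below -/
import Mathlib

section
/- (Representation formula) Let Ω ⊂ ℍ_s^n, let f : Ω → ℍ be path-slice, let γ ∈ 𝒫(ℂ^n, Ω), and let I, J, K ∈ 𝕊(Ω, γ) with J ≠ K. Then for every t ∈ [0,1], f(γ^I(t)) = f(γ^J(t)) + (I − J)·(J − K)⁻¹·( f(γ^J(t)) − f(γ^K(t)) ), where (J − K)⁻¹ is the inverse of J − K in the quaternions. -/
open scoped Quaternion
open Classical

attribute [local instance] Classical.propDecidable

noncomputable section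

/-- Continuous-path carrier type: maps from `[0,1]` to `ℂⁿ`. -/
abbrev PathC (n : ℕ) := unitInterval → (Fin n → ℂ)

/-- The sphere of quaternionic imaginary units `𝕊 = {I : I² = -1}`. -/
def SQ : Set ℍ[ℝ] := {I | I ^ 2 = -1}

/-- A quaternion is real if it is the image of a real number. -/
def IsRealQ (p : ℍ[ℝ]) : Prop := ∃ r : ℝ, p = (r : ℍ[ℝ])

/-- `Ψ_i^I : ℂⁿ → ℂ_Iⁿ`, componentwise `x + y i ↦ x + y I`. -/
def psi {n : ℕ} (I : ℍ[ℝ]) (z : Fin n → ℂ) : Fin n → ℍ[ℝ] :=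
  fun k => ((z k).re : ℍ[ℝ]) + (z k).im • I

/-- The slice `ℂ_I = {x + y I}` as a subset of the quaternions. -/
def CI (I : ℍ[ℝ]) : Set ℍ[ℝ] := {p | ∃ x y : ℝ, p = (x : ℍ[ℝ]) + y • I}

/-- The weakly slice cone `ℍ_sⁿ = ⋃_{I ∈ 𝕊} ℂ_Iⁿ`. -/
def HSliceCone (n : ℕ) : Set (Fin n → ℍ[ℝ]) := ⋃ I ∈ SQ, Set.range (psi (n := n) I)

/-- Membership in `𝒫(ℂⁿ)`: continuous with real initial point. -/
def IsPathP {n : ℕ} (γ : PathC n) : Prop :=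
  Continuous γ ∧ ∀ k, ((γ 0) k).im = 0

/-- `γ^I ⊂ Ω`. -/
def pathInSlice {n : ℕ} (Ω : Set (Fin n → ℍ[ℝ])) (I : ℍ[ℝ]) (γ : PathC n) : Prop :=
  ∀ t, psi I (γ t) ∈ Ω

/-- `𝕊(Ω, γ) = {I ∈ 𝕊 : γ^I ⊂ Ω}`. -/
def SGamma {n : ℕ} (Ω : Set (Fin n → ℍ[ℝ])) (γ : PathC n) : Set ℍ[ℝ] :=
  {I | I ∈ SQ ∧ pathInSlice Ω I γ}

/-- `γ ∈ 𝒫(ℂⁿ, Ω)`. -/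
def PathIn {n : ℕ} (Ω : Set (Fin n → ℍ[ℝ])) (γ : PathC n) : Prop :=
  IsPathP γ ∧ ∃ I, I ∈ SGamma Ω γ

/-- `F` is a path-slice stem function of `f` on `Ω`. -/
def IsStem {n : ℕ} (Ω : Set (Fin n → ℍ[ℝ])) (f : (Fin n → ℍ[ℝ]) → ℍ[ℝ])
    (F : PathC n → ℍ[ℝ] × ℍ[ℝ]) : Prop :=
  ∀ γ, PathIn Ω γ → ∀ I ∈ SGamma Ω γ, f (psi I (γ 1)) = (F γ).1 + I * (F γ).2

/-- `f` is a path-slice function on `Ω`. -/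
def PathSlice {n : ℕ} (Ω : Set (Fin n → ℍ[ℝ])) (f : (Fin n → ℍ[ℝ]) → ℍ[ℝ]) : Prop :=
  ∃ F, IsStem Ω f F

/-- `Ω` is real-path-connected. -/
def RealPathConnected {n : ℕ} (Ω : Set (Fin n → ℍ[ℝ])) : Prop :=
  ∀ q ∈ Ω, ∃ γ : PathC n, PathIn Ω γ ∧ ∃ I ∈ SGamma Ω γ, psi I (γ 1) = q

/-- `Ω₂` is `Ω₁`-stem-preserving. -/
def StemPreserving {n : ℕ} (Ω₁ Ω₂ : Set (Fin n → ℍ[ℝ])) : Prop :=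
  (∀ γ : PathC n, PathIn Ω₁ γ → (SGamma Ω₂ γ).Nontrivial) ∧
  (∀ α β : PathC n, PathIn Ω₁ α → PathIn Ω₁ β → α 1 = β 1 →
    ¬ ∃ I, SGamma Ω₂ α ∩ SGamma Ω₂ β = {I})

/-- `Ω` is self-stem-preserving. -/
def SelfStemPreserving {n : ℕ} (Ω : Set (Fin n → ℍ[ℝ])) : Prop :=
  RealPathConnected Ω ∧ StemPreserving Ω Ω

/-- The map `𝕴 : ℍ_sⁿ → 𝕊 ∪ {0}`. -/
def frakI {n : ℕ} (q : Fin n → ℍ[ℝ]) : ℍ[ℝ] :=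
  if h : ∀ k, IsRealQ (q k) then 0
  else
    let k := (Finset.univ.filter fun k => ¬ IsRealQ (q k)).min' (by
      push_neg at h
      obtain ⟨k, hk⟩ := h
      exact ⟨k, Finset.mem_filter.mpr ⟨Finset.mem_univ k, hk⟩⟩)
    ‖q k - ((q k).re : ℍ[ℝ])‖⁻¹ • (q k - ((q k).re : ℍ[ℝ]))

/-- A choice of path-slice stem function of `f` (on paths in `Ω`); by
the results of Dou–Jin–Ren–Yang its restriction to `𝒫(ℂⁿ, Ω₁)` is the canonical `F^f_{Ω₁}`. -/
def stemOf {n : ℕ} (Ω : Set (Fin n → ℍ[ℝ])) (f : (Fin n → ℍ[ℝ]) → ℍ[ℝ]) :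
    PathC n → ℍ[ℝ] × ℍ[ℝ] :=
  Classical.epsilon (IsStem Ω f)

/-- The function `ℱ^f_{Ω₁} : Ω₁ → ℍ²` induced by the stem of `f` (path-slice on `Ω₂`). -/
def scrF {n : ℕ} (Ω₁ Ω₂ : Set (Fin n → ℍ[ℝ])) (f : (Fin n → ℍ[ℝ]) → ℍ[ℝ])
    (q : Fin n → ℍ[ℝ]) : ℍ[ℝ] × ℍ[ℝ] :=
  if ∀ k, IsRealQ (q k) then (f q, 0)
  else stemOf Ω₂ f (Classical.epsilon (fun γ : PathC n =>
    PathIn Ω₁ γ ∧ pathInSlice Ω₁ (frakI q) γ ∧ psi (frakI q) (γ 1) = q))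

/-- The `Ω₁`-slice conjugation `f^c_{Ω₁}`. -/
def sliceConj {n : ℕ} (Ω₁ Ω₂ : Set (Fin n → ℍ[ℝ])) (f : (Fin n → ℍ[ℝ]) → ℍ[ℝ]) :
    (Fin n → ℍ[ℝ]) → ℍ[ℝ] :=
  fun q => star (scrF Ω₁ Ω₂ f q).1 + frakI q * star (scrF Ω₁ Ω₂ f q).2

/-- The `*`-product `g * f` of a path-slice `g : Ω₁ → ℍ` with `f : Ω₂ → ℍ`. -/
def starProdF {n : ℕ} (Ω₁ Ω₂ : Set (Fin n → ℍ[ℝ])) (g f : (Fin n → ℍ[ℝ]) → ℍ[ℝ]) :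
    (Fin n → ℍ[ℝ]) → ℍ[ℝ] :=
  fun q => g q * (scrF Ω₁ Ω₂ f q).1 + frakI q * g q * (scrF Ω₁ Ω₂ f q).2

/-- The symmetrization `f^s_{Ω₁} = f^c_{Ω₁} * f`. -/
def symmF {n : ℕ} (Ω₁ Ω₂ : Set (Fin n → ℍ[ℝ])) (f : (Fin n → ℍ[ℝ]) → ℍ[ℝ]) :
    (Fin n → ℍ[ℝ]) → ℍ[ℝ] :=
  starProdF Ω₁ Ω₂ (sliceConj Ω₁ Ω₂ f) f

/-- The pointwise `*`-product on `ℍ²`. -/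
def starPair (p q : ℍ[ℝ] × ℍ[ℝ]) : ℍ[ℝ] × ℍ[ℝ] :=
  (p.1 * q.1 - p.2 * q.2, p.2 * q.1 + p.1 * q.2)

/-- Slice-open sets: every slice is open (pulled back to `ℂⁿ` via `Ψ_i^I`). -/
def SliceOpen {n : ℕ} (U : Set (Fin n → ℍ[ℝ])) : Prop :=
  ∀ I ∈ SQ, IsOpen {z : Fin n → ℂ | psi I z ∈ U}

/-- Weakly slice regular functions: each slice restriction is left `I`-holomorphic. -/
def SliceRegular {n : ℕ} (Ω : Set (Fin n → ℍ[ℝ])) (f : (Fin n → ℍ[ℝ]) → ℍ[ℝ]) : Prop :=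
  ∀ I ∈ SQ, ∀ z : Fin n → ℂ, psi I z ∈ Ω →
    DifferentiableWithinAt ℝ (fun w => f (psi I w)) {w | psi I w ∈ Ω} z ∧
    ∀ ℓ : Fin n,
      fderivWithin ℝ (fun w => f (psi I w)) {w | psi I w ∈ Ω} z (Pi.single ℓ 1)
        + I * fderivWithin ℝ (fun w => f (psi I w)) {w | psi I w ∈ Ω} z (Pi.single ℓ Complex.I)
        = 0

/-- The ball `B_I(q, r)` inside the slice `ℂ_Iⁿ`. -/
def BI {n : ℕ} (I : ℍ[ℝ]) (q : Fin n → ℍ[ℝ]) (r : ℝ) : Set (Fin n → ℍ[ℝ]) :=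
  {p | p ∈ Set.range (psi (n := n) I) ∧ dist p q < r}

/-- The slice topology. -/
def sliceTop (n : ℕ) : TopologicalSpace (Fin n → ℍ[ℝ]) where
  IsOpen := SliceOpen
  isOpen_univ := by intro I _; simpa using isOpen_univ
  isOpen_inter := by
    intro s t hs ht I hI
    have h : {z : Fin n → ℂ | psi I z ∈ s ∩ t}
        = {z : Fin n → ℂ | psi I z ∈ s} ∩ {z : Fin n → ℂ | psi I z ∈ t} := by
      ext z; simp [Set.mem_inter_iff]
    rw [h]
    exact (hs I hI).inter (ht I hI)
  isOpen_sUnion := by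
    intro S hS I hI
    have h : {z : Fin n → ℂ | psi I z ∈ ⋃₀ S} = ⋃ s ∈ S, {z : Fin n → ℂ | psi I z ∈ s} := by
      ext z; simp
    rw [h]
    exact isOpen_biUnion fun s hs => hS s hs I hI

/-- Slice-domains: nonempty slice-open sets connected in the slice topology. -/
def SliceDomain {n : ℕ} (Ω : Set (Fin n → ℍ[ℝ])) : Prop :=
  SliceOpen Ω ∧ @IsConnected _ (sliceTop n) Ω

/-- Concatenation `γ · ℒ_{γ(1)}^z` of a path with the segment from `γ(1)` to `z`. -/
def concatSeg {n : ℕ} (γ : PathC n) (z : Fin n → ℂ) : PathC n := fun t =>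
  if h : (t : ℝ) ≤ 1 / 2 then
    γ ⟨2 * (t : ℝ), ⟨by linarith [t.2.1], by linarith⟩⟩
  else
    (1 - (2 * (t : ℝ) - 1)) • γ 1 + (2 * (t : ℝ) - 1) • z

/-- The action of `σ` on `ℍ²`: `σ(p₁, p₂) = (-p₂, p₁)`. -/
def sigmaAct (p : ℍ[ℝ] × ℍ[ℝ]) : ℍ[ℝ] × ℍ[ℝ] := (-p.2, p.1)

/-- `F : 𝒫(ℂⁿ, Ω) → ℍ²` is holomorphic at the path `γ`. -/
def StemHoloAt {n : ℕ} (Ω : Set (Fin n → ℍ[ℝ])) (F : PathC n → ℍ[ℝ] × ℍ[ℝ])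
    (γ : PathC n) : Prop :=
  ∃ r > 0, (∀ z ∈ Metric.ball (γ 1) r, PathIn Ω (concatSeg γ z)) ∧
    ∀ z ∈ Metric.ball (γ 1) r,
      DifferentiableAt ℝ (fun w => F (concatSeg γ w)) z ∧
      ∀ ℓ : Fin n,
        fderiv ℝ (fun w => F (concatSeg γ w)) z (Pi.single ℓ 1)
          + sigmaAct (fderiv ℝ (fun w => F (concatSeg γ w)) z (Pi.single ℓ Complex.I)) = 0

/-- `F` is holomorphic (at every path of `𝒫(ℂⁿ, Ω)`). -/
def StemHolo {n : ℕ} (Ω : Set (Fin n → ℍ[ℝ])) (F : PathC n → ℍ[ℝ] × ℍ[ℝ]) : Prop :=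
  ∀ γ, PathIn Ω γ → StemHoloAt Ω F γ

/-- `E` is a complex-analytic subset of the open set `U ⊂ ℂⁿ`. -/
def IsComplexAnalyticSubset {n : ℕ} (U E : Set (Fin n → ℂ)) : Prop :=
  E ⊆ U ∧ ∀ z ∈ U, ∃ V, V ⊆ U ∧ IsOpen V ∧ z ∈ V ∧
    ∃ (m : ℕ) (h : Fin m → (Fin n → ℂ) → ℂ),
      (∀ j, DifferentiableOn ℂ (h j) V) ∧ E ∩ V = {w | w ∈ V ∧ ∀ j, h j w = 0}

/-- `A` is a path-slice analytic subset of the slice-domain `Ω`. -/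
def PathSliceAnalytic {n : ℕ} (Ω A : Set (Fin n → ℍ[ℝ])) : Prop :=
  A = Ω ∨ ∀ γ : PathC n, PathIn Ω γ →
    ∃ r > 0, ∃ rI : ℍ[ℝ] → ℝ, (∀ I ∈ SGamma Ω γ, rI I ∈ Set.Ioc (0 : ℝ) r) ∧
      ∃ E : Set (Fin n → ℂ), IsComplexAnalyticSubset (Metric.ball (γ 1) r) E ∧
        E ≠ Metric.ball (γ 1) r ∧
        ∀ I ∈ SGamma Ω γ, A ∩ BI I (psi I (γ 1)) (rI I) ⊆ psi I '' E


/-- Representation formula. -/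
theorem representation_formula {n : ℕ} (Ω : Set (Fin n → ℍ[ℝ])) (hΩ : Ω ⊆ HSliceCone n)
    (f : (Fin n → ℍ[ℝ]) → ℍ[ℝ]) (hf : PathSlice Ω f)
    (γ : PathC n) (hγ : PathIn Ω γ) (I J K : ℍ[ℝ])
    (hI : I ∈ SGamma Ω γ) (hJ : J ∈ SGamma Ω γ) (hK : K ∈ SGamma Ω γ) (hJK : J ≠ K) :
    ∀ t : unitInterval, f (psi I (γ t)) = f (psi J (γ t))
      + (I - J) * (J - K)⁻¹ * (f (psi J (γ t)) - f (psi K (γ t))) := by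
  obtain ⟨F, hF⟩ := hf
  intro t
  -- the truncated path s ↦ γ (t * s)
  set γt : PathC n := fun s => γ (t * s) with hγt
  have hend : γt 1 = γ t := by simp [hγt]
  have hcont : Continuous γt := by
    apply hγ.1.1.comp
    exact Continuous.subtype_mk (continuous_const.mul continuous_subtype_val) _
  have hstart : ∀ k, ((γt 0) k).im = 0 := by
    intro k
    have : γt 0 = γ 0 := by simp [hγt]
    rw [this]; exact hγ.1.2 k
  have hslice : ∀ L : ℍ[ℝ], L ∈ SGamma Ω γ → L ∈ SGamma Ω γt := by
    intro L hL
    exact ⟨hL.1, fun s => hL.2 (t * s)⟩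
  have hPath : PathIn Ω γt := ⟨⟨hcont, hstart⟩, I, hslice I hI⟩
  have hfI := hF γt hPath I (hslice I hI)
  have hfJ := hF γt hPath J (hslice J hJ)
  have hfK := hF γt hPath K (hslice K hK)
  rw [hend] at hfI hfJ hfK
  rw [hfI, hfJ, hfK]
  have hne : J - K ≠ 0 := sub_ne_zero.mpr hJK
  have key : (J - K)⁻¹ * (((F γt).1 + J * (F γt).2) - ((F γt).1 + K * (F γt).2))
      = (F γt).2 := by
    have : ((F γt).1 + J * (F γt).2) - ((F γt).1 + K * (F γt).2)
        = (J - K) * (F γt).2 := by noncomm_ring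
    rw [this, ← mul_assoc, inv_mul_cancel₀ hne, one_mul]
  rw [mul_assoc, key]
  noncomm_ring

end
end

section
/- Let Ω ⊂ ℍ_s^n be self-stem-preserving and let f : Ω → ℍ be path-slice. Then 𝒵(f) ⊂ 𝒵(f^s_Ω), i.e. for every q ∈ Ω with f(q) = 0 one has f^s_Ω(q) = 0, where f^s_Ω is the symmetrization of f on Ω and 𝒵(h) := {q : h(q) = 0}. -/
open scoped Quaternion
open Classical

attribute [local instance] Classical.propDecidable

noncomputable section

/-! Write `J = 𝕴(q)` and `(a, b) = ℱ^f(q)`. Whenever `q` is not real it is the endpoint of a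
path in the slice `ℂ_I` for some `I ∈ 𝕊`, and `J = ±I`; conjugating the path if necessary gives
one in `ℂ_J`, so the stem representation yields `f(q) = a + J b` (trivially so for real `q`).
As `Re J = 0`, `J²` is real, hence if `a = -J b` then
`g = conj a + J conj b = conj b · J + J · conj b` commutes with `J`, and `f^s(q) = g a + J g b = g (a + J b) = g f(q) = 0`. -/

lemma re_eq_zero_of_mem_SQ {I : ℍ[ℝ]} (hI : I ∈ SQ) : I.re = 0 := by
  have h : I * I = -1 := by rw [← pow_two]; exact hI
  rw [Quaternion.ext_iff] at h
  simp only [Quaternion.re_mul, Quaternion.imI_mul, Quaternion.imJ_mul, Quaternion.imK_mul,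
    Quaternion.re_neg, Quaternion.imI_neg, Quaternion.imJ_neg, Quaternion.imK_neg,
    Quaternion.re_one, Quaternion.imI_one, Quaternion.imJ_one, Quaternion.imK_one] at h
  obtain ⟨h1, h2, h3, h4⟩ := h
  by_contra hre
  have hi : I.imI = 0 := by
    apply mul_left_cancel₀ (mul_ne_zero two_ne_zero hre); linarith
  have hj : I.imJ = 0 := by
    apply mul_left_cancel₀ (mul_ne_zero two_ne_zero hre); linarith
  have hk : I.imK = 0 := by
    apply mul_left_cancel₀ (mul_ne_zero two_ne_zero hre); linarith
  rw [hi, hj, hk] at h1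
  nlinarith [sq_nonneg I.re]

lemma norm_eq_one_of_mem_SQ {I : ℍ[ℝ]} (hI : I ∈ SQ) : ‖I‖ = 1 := by
  have h : I ^ 2 = -((Quaternion.normSq I : ℝ) : ℍ[ℝ]) :=
    Quaternion.sq_eq_neg_normSq.mpr (re_eq_zero_of_mem_SQ hI)
  rw [hI] at h
  have h1 : ‖I‖ * ‖I‖ = 1 := by
    simpa [Quaternion.normSq_eq_norm_mul_self] using (congrArg QuaternionAlgebra.re h).symm
  nlinarith [norm_nonneg I]

lemma neg_mem_SQ {I : ℍ[ℝ]} (hI : I ∈ SQ) : -I ∈ SQ := by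
  rwa [SQ, Set.mem_ofPred_eq, neg_sq]

lemma frakI_re {n : ℕ} (q : Fin n → ℍ[ℝ]) : (frakI q).re = 0 := by
  unfold frakI
  split_ifs <;> simp

lemma star_add_mul_star_mul_add_eq_zero {J a b : ℍ[ℝ]} (hJ : J.re = 0) (hab : a + J * b = 0) :
    (star a + J * star b) * a + J * (star a + J * star b) * b = 0 := by
  have ha : a = -(J * b) := eq_neg_of_add_eq_zero_left hab
  have hJJ : J * J = -((Quaternion.normSq J : ℝ) : ℍ[ℝ]) := by
    rw [← pow_two]; exact Quaternion.sq_eq_neg_normSq.mpr hJ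
  have hcomm : J * J * star b = star b * (J * J) := by
    rw [hJJ, neg_mul, mul_neg, Quaternion.coe_commutes]
  rw [ha, star_neg, star_mul, Quaternion.star_eq_neg.mpr hJ]
  calc _ = J * J * star b * b - star b * (J * J) * b := by noncomm_ring
    _ = 0 := by rw [hcomm, sub_self]

lemma unit_im_eq_or_eq_neg {I p : ℍ[ℝ]} (hI : I ∈ SQ) {x y : ℝ} (hp : p = (x : ℍ[ℝ]) + y • I)
    (hreal : ¬ IsRealQ p) :
    ‖p - (p.re : ℍ[ℝ])‖⁻¹ • (p - (p.re : ℍ[ℝ])) = I ∨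
      ‖p - (p.re : ℍ[ℝ])‖⁻¹ • (p - (p.re : ℍ[ℝ])) = -I := by
  have him : p - (p.re : ℍ[ℝ]) = y • I := by
    simp [hp, re_eq_zero_of_mem_SQ hI]
  have hy : y ≠ 0 := by
    rintro rfl
    exact hreal ⟨x, by simp [hp]⟩
  rw [him, norm_smul, norm_eq_one_of_mem_SQ hI, mul_one, Real.norm_eq_abs, smul_smul]
  rcases hy.lt_or_gt with hneg | hpos
  · right
    rw [abs_of_neg hneg, inv_neg, neg_mul, inv_mul_cancel₀ hneg.ne, neg_smul, one_smul]
  · left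
    rw [abs_of_pos hpos, inv_mul_cancel₀ hpos.ne', one_smul]

lemma frakI_psi_eq_or_eq_neg {n : ℕ} {I : ℍ[ℝ]} (hI : I ∈ SQ) (z : Fin n → ℂ)
    (hreal : ¬ ∀ k, IsRealQ (psi I z k)) :
    frakI (psi I z) = I ∨ frakI (psi I z) = -I := by
  unfold frakI
  rw [dif_neg hreal]
  apply unit_im_eq_or_eq_neg hI rfl
  exact (Finset.mem_filter.mp
    (Finset.min'_mem (Finset.univ.filter fun k => ¬ IsRealQ (psi I z k)) _)).2

def conjPath {n : ℕ} (γ : PathC n) : PathC n := fun t k => starRingEnd ℂ (γ t k)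

lemma psi_neg_conj {n : ℕ} (I : ℍ[ℝ]) (z : Fin n → ℂ) :
    psi (-I) (fun k => starRingEnd ℂ (z k)) = psi I z := by
  funext k
  simp [psi]

lemma isPathP_conjPath {n : ℕ} {γ : PathC n} (hγ : IsPathP γ) : IsPathP (conjPath γ) :=
  ⟨continuous_pi fun k => Complex.continuous_conj.comp ((continuous_apply k).comp hγ.1),
    fun k => by simp [conjPath, hγ.2 k]⟩

lemma pathInSlice_conjPath {n : ℕ} {Ω : Set (Fin n → ℍ[ℝ])} {I : ℍ[ℝ]} {γ : PathC n}
    (h : pathInSlice Ω I γ) : pathInSlice Ω (-I) (conjPath γ) := fun t => by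
  show psi (-I) (fun k => starRingEnd ℂ (γ t k)) ∈ Ω
  rw [psi_neg_conj]
  exact h t

lemma exists_path_frakI {n : ℕ} {Ω : Set (Fin n → ℍ[ℝ])} (hΩ : RealPathConnected Ω)
    {q : Fin n → ℍ[ℝ]} (hq : q ∈ Ω) (hreal : ¬ ∀ k, IsRealQ (q k)) :
    frakI q ∈ SQ ∧ ∃ δ : PathC n, PathIn Ω δ ∧ pathInSlice Ω (frakI q) δ ∧
      psi (frakI q) (δ 1) = q := by
  obtain ⟨γ, hγ, I, ⟨hI, hγI⟩, rfl⟩ := hΩ q hq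
  rcases frakI_psi_eq_or_eq_neg hI (γ 1) hreal with hJ | hJ <;> rw [hJ]
  · exact ⟨hI, γ, hγ, hγI, rfl⟩
  · exact ⟨neg_mem_SQ hI, conjPath γ,
      ⟨isPathP_conjPath hγ.1, -I, neg_mem_SQ hI, pathInSlice_conjPath hγI⟩,
      pathInSlice_conjPath hγI, psi_neg_conj I (γ 1)⟩

lemma apply_eq_scrF_fst_add_frakI_mul_snd {n : ℕ} {Ω : Set (Fin n → ℍ[ℝ])}
    (hΩ : RealPathConnected Ω) {f : (Fin n → ℍ[ℝ]) → ℍ[ℝ]} (hf : PathSlice Ω f)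
    {q : Fin n → ℍ[ℝ]} (hq : q ∈ Ω) :
    f q = (scrF Ω Ω f q).1 + frakI q * (scrF Ω Ω f q).2 := by
  by_cases hreal : ∀ k, IsRealQ (q k)
  · simp [scrF, if_pos hreal]
  · obtain ⟨hJ, hδ⟩ := exists_path_frakI hΩ hq hreal
    obtain ⟨hδΩ, hδJ, hδq⟩ := Classical.epsilon_spec hδ
    rw [scrF, if_neg hreal]
    conv_lhs => rw [← hδq]
    exact Classical.epsilon_spec hf _ hδΩ _ ⟨hJ, hδJ⟩

theorem zero_subset_symm_zero_general {n : ℕ} (Ω : Set (Fin n → ℍ[ℝ]))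
    (hssp : SelfStemPreserving Ω) (f : (Fin n → ℍ[ℝ]) → ℍ[ℝ]) (hf : PathSlice Ω f) :
    ∀ q ∈ Ω, f q = 0 → symmF Ω Ω f q = 0 := by
  intro q hq hq0
  have hrep := apply_eq_scrF_fst_add_frakI_mul_snd hssp.1 hf hq
  rw [hq0] at hrep
  exact star_add_mul_star_mul_add_eq_zero (frakI_re q) hrep.symm

/-- zeros of a path-slice function are zeros of its symmetrization. -/
theorem zero_subset_symm_zero {n : ℕ} (Ω : Set (Fin n → ℍ[ℝ])) (hΩ : Ω ⊆ HSliceCone n)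
    (hssp : SelfStemPreserving Ω) (f : (Fin n → ℍ[ℝ]) → ℍ[ℝ]) (hf : PathSlice Ω f) :
    ∀ q ∈ Ω, f q = 0 → symmF Ω Ω f q = 0 :=
  zero_subset_symm_zero_general Ω hssp f hf

end
end

section
/- Let Ω₁ ⊂ ℍ_s^n be real-path-connected, let Ω₂ ⊂ ℍ_s^n be Ω₁-stem-preserving, let f : Ω₂ → ℍ be path-slice, let γ ∈ 𝒫(ℂ^n, Ω₁), and let I ∈ 𝕊(Ω₁, γ) be such that f^s_{Ω₁}(γ^I(1)) = 0. Then f^s_{Ω₁}(γ^J(1)) = 0 for every J ∈ 𝕊(Ω₁, γ); that is, γ^{𝕊(Ω₁,γ)}(1) := {γ^J(1) : J ∈ 𝕊(Ω₁, γ)} is contained in the zero set of f^s_{Ω₁}. -/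
open scoped Quaternion
open Classical

attribute [local instance] Classical.propDecidable

noncomputable section

/-! Along a path `γ`, the symmetrization at `γ^K(1)` is `(|A|² - |B|²) + 2 Re(Ā B) 𝕴(γ^K(1))`,
where `(A, B)` is the stem of `f` at a path realizing `γ^K(1)` on the slice `𝕴(γ^K(1))`.
That slice is `±K`, with a sign depending only on `γ(1)`, and stem preservation makes the stem
independent of the realizing path, so one path (`γ` or its conjugate) serves every `K` and `A, B`
do not depend on `K`. A quaternion `x + y K` with `x, y` real vanishes only if `x = y = 0`. -/

open Quaternion

section ImaginaryUnits

variable {K : ℍ[ℝ]}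

lemma re_eq_zero_of_mem_SQ_s13 (hK : K ∈ SQ) : K.re = 0 := by
  have hK' : K * K = -1 := by rw [← sq]; exact hK
  have hre := congrArg QuaternionAlgebra.re hK'
  have hi := congrArg QuaternionAlgebra.imI hK'
  have hj := congrArg QuaternionAlgebra.imJ hK'
  have hk := congrArg QuaternionAlgebra.imK hK'
  simp only [Quaternion.re_mul, Quaternion.imI_mul, Quaternion.imJ_mul, Quaternion.imK_mul,
    Quaternion.re_neg, Quaternion.imI_neg, Quaternion.imJ_neg, Quaternion.imK_neg,
    Quaternion.re_one, Quaternion.imI_one, Quaternion.imJ_one, Quaternion.imK_one] at hre hi hj hk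
  nlinarith [sq_nonneg K.re, sq_nonneg K.imI, sq_nonneg K.imJ, sq_nonneg K.imK]

lemma norm_eq_one_of_mem_SQ_s13 (hK : K ∈ SQ) : ‖K‖ = 1 := by
  have h : ((normSq K : ℝ) : ℍ[ℝ]) = 1 := by
    have := (Quaternion.sq_eq_neg_normSq (a := K)).mpr (re_eq_zero_of_mem_SQ_s13 hK)
    rw [hK.out] at this
    exact (neg_inj.mp this).symm
  rw [← pow_eq_one_iff_of_nonneg (norm_nonneg K) two_ne_zero, sq, ← normSq_eq_norm_mul_self]
  exact Quaternion.coe_injective (by rw [h, Quaternion.coe_one])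

lemma ne_zero_of_mem_SQ (hK : K ∈ SQ) : K ≠ 0 := by
  rintro rfl
  simpa using norm_eq_one_of_mem_SQ_s13 hK

lemma smul_mem_SQ (hK : K ∈ SQ) {c : ℝ} (hc : c * c = 1) : c • K ∈ SQ := by
  change (c • K) ^ 2 = -1
  rw [smul_pow, sq c, hc, one_smul]
  exact hK

lemma coe_add_smul_injective_of_mem_SQ (hK : K ∈ SQ) {x y x' y' : ℝ}
    (h : (x : ℍ[ℝ]) + y • K = (x' : ℍ[ℝ]) + y' • K) : x = x' ∧ y = y' := by
  have hx : x = x' := by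
    simpa [re_eq_zero_of_mem_SQ_s13 hK] using congrArg QuaternionAlgebra.re h
  subst hx
  exact ⟨rfl, smul_left_injective ℝ (ne_zero_of_mem_SQ hK) (add_left_cancel h)⟩

lemma isRealQ_coe_add_smul_iff (hK : K ∈ SQ) {x y : ℝ} :
    IsRealQ ((x : ℍ[ℝ]) + y • K) ↔ y = 0 := by
  constructor
  · rintro ⟨r, hr⟩
    exact (coe_add_smul_injective_of_mem_SQ hK (x' := r) (y' := 0) (by simpa using hr)).2
  · rintro rfl
    exact ⟨x, by simp⟩

end ImaginaryUnits

section SlicePsi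

variable {n : ℕ} {K : ℍ[ℝ]}

lemma psi_injective (hK : K ∈ SQ) : Function.Injective (psi (n := n) K) := fun _ _ h =>
  funext fun k =>
    let h' := coe_add_smul_injective_of_mem_SQ hK (congrFun h k)
    Complex.ext h'.1 h'.2

lemma isRealQ_psi_iff (hK : K ∈ SQ) (z : Fin n → ℂ) (k : Fin n) :
    IsRealQ (psi K z k) ↔ (z k).im = 0 :=
  isRealQ_coe_add_smul_iff hK

lemma psi_eq_psi_of_forall_im_eq_zero {z : Fin n → ℂ} (hz : ∀ k, (z k).im = 0) (I J : ℍ[ℝ]) :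
    psi I z = psi J z := by
  funext k
  simp [psi, hz k]

lemma exists_frakI_psi_eq_smul {z : Fin n → ℂ} (hz : ¬ ∀ k, (z k).im = 0) :
    ∃ c : ℝ, c * c = 1 ∧ ∀ K ∈ SQ, frakI (psi K z) = c • K := by
  have hne : (Finset.univ.filter fun k => (z k).im ≠ 0).Nonempty := by
    push Not at hz
    obtain ⟨k, hk⟩ := hz
    exact ⟨k, by simpa using hk⟩
  set k₀ := (Finset.univ.filter fun k => (z k).im ≠ 0).min' hne
  have him : (z k₀).im ≠ 0 := by simpa using Finset.min'_mem _ hne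
  refine ⟨|(z k₀).im|⁻¹ * (z k₀).im, ?_, fun K hK => ?_⟩
  · field_simp
    exact (sq_abs _).symm
  have hnotreal : ¬ ∀ k, IsRealQ (psi K z k) := by
    simpa only [isRealQ_psi_iff hK] using hz
  have hfilter : (Finset.univ.filter fun k => ¬ IsRealQ (psi K z k)) =
      Finset.univ.filter fun k => (z k).im ≠ 0 := by
    simp only [isRealQ_psi_iff hK]
  have hsub : psi K z k₀ - ((psi K z k₀).re : ℍ[ℝ]) = (z k₀).im • K := by
    simp [psi, re_eq_zero_of_mem_SQ_s13 hK]
  rw [frakI, dif_neg hnotreal]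
  simp only [hfilter]
  rw [hsub, norm_smul, norm_eq_one_of_mem_SQ_s13 hK, mul_one, Real.norm_eq_abs, smul_smul]

end SlicePsi

def scaleIm {ι : Type*} (c : ℝ) (z : ι → ℂ) : ι → ℂ := fun k => ⟨(z k).re, c * (z k).im⟩

lemma continuous_scaleIm {ι : Type*} (c : ℝ) : Continuous (scaleIm (ι := ι) c) := by
  have h : scaleIm (ι := ι) c = fun z k => ((z k).re + (c * (z k).im : ℝ) * Complex.I : ℂ) := by
    funext z k
    exact Complex.mk_eq_add_mul_I _ _
  rw [h]
  fun_prop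

lemma psi_scaleIm {n : ℕ} (K : ℍ[ℝ]) (c : ℝ) (z : Fin n → ℂ) :
    psi K (scaleIm c z) = psi (c • K) z := by
  funext k
  simp [psi, scaleIm, smul_smul, mul_comm]

lemma eq_and_eq_of_add_mul_eq_add_mul {R : Type*} [Ring R] [NoZeroDivisors R]
    {a b a' b' K₁ K₂ : R} (hK : K₁ ≠ K₂)
    (h₁ : a + K₁ * b = a' + K₁ * b') (h₂ : a + K₂ * b = a' + K₂ * b') : a = a' ∧ b = b' := by
  have hb : (K₁ - K₂) * (b - b') = 0 := by
    calc (K₁ - K₂) * (b - b') = (a + K₁ * b) - (a + K₂ * b) - ((a' + K₁ * b') - (a' + K₂ * b')) := by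
          noncomm_ring
      _ = 0 := by rw [h₁, h₂, sub_self]
  have hb : b = b' := sub_eq_zero.mp ((mul_eq_zero.mp hb).resolve_left (sub_ne_zero.mpr hK))
  subst hb
  exact ⟨add_right_cancel h₁, rfl⟩

lemma exists_continuous_range_eq_union {X : Type*} [TopologicalSpace X]
    {α β : unitInterval → X} (hα : Continuous α) (hβ : Continuous β) (h : α 1 = β 1) :
    ∃ η : unitInterval → X, Continuous η ∧ η 0 = α 0 ∧ Set.range η = Set.range α ∪ Set.range β := by
  let pα : Path (α 0) (α 1) := ⟨⟨α, hα⟩, rfl, rfl⟩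
  let pβ : Path (β 0) (β 1) := ⟨⟨β, hβ⟩, rfl, rfl⟩
  let p := pα.trans (pβ.symm.cast h rfl)
  refine ⟨p, p.continuous, p.source, ?_⟩
  rw [Path.trans_range, Path.cast_coe, Path.symm_range]
  rfl

section Stem

variable {n : ℕ}

lemma SGamma_eq_inter_of_range_eq_union (Ω : Set (Fin n → ℍ[ℝ])) {α β η : PathC n}
    (h : Set.range η = Set.range α ∪ Set.range β) :
    SGamma Ω η = SGamma Ω α ∩ SGamma Ω β := by
  ext K
  simp only [SGamma, pathInSlice, Set.mem_ofPred_eq, Set.mem_inter_iff]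
  have hr : ∀ γ : PathC n, (∀ t, psi K (γ t) ∈ Ω) ↔ Set.range γ ⊆ {z | psi K z ∈ Ω} :=
    fun γ => by rw [Set.range_subset_iff]; rfl
  rw [hr, hr, hr, h, Set.union_subset_iff]
  tauto

lemma IsStem.apply_eq_of_nontrivial {Ω : Set (Fin n → ℍ[ℝ])} {f : (Fin n → ℍ[ℝ]) → ℍ[ℝ]}
    {F : PathC n → ℍ[ℝ] × ℍ[ℝ]} (hF : IsStem Ω f F) {α β : PathC n}
    (hα : IsPathP α) (hβ : IsPathP β) (hend : α 1 = β 1)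
    (hS : (SGamma Ω α ∩ SGamma Ω β).Nontrivial) : F α = F β := by
  obtain ⟨K₁, ⟨hK₁α, hK₁β⟩, K₂, ⟨hK₂α, hK₂β⟩, hne⟩ := hS
  have heq : ∀ K, K ∈ SGamma Ω α → K ∈ SGamma Ω β →
      (F α).1 + K * (F α).2 = (F β).1 + K * (F β).2 := fun K hKα hKβ => by
    rw [← hF α ⟨hα, K, hKα⟩ K hKα, ← hF β ⟨hβ, K, hKβ⟩ K hKβ, hend]
  obtain ⟨h₁, h₂⟩ := eq_and_eq_of_add_mul_eq_add_mul hne (heq K₁ hK₁α hK₁β) (heq K₂ hK₂α hK₂β)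
  exact Prod.ext h₁ h₂

lemma StemPreserving.stem_apply_eq {Ω₁ Ω₂ : Set (Fin n → ℍ[ℝ])} (hsp : StemPreserving Ω₁ Ω₂)
    {f : (Fin n → ℍ[ℝ]) → ℍ[ℝ]} {F : PathC n → ℍ[ℝ] × ℍ[ℝ]} (hF : IsStem Ω₂ f F)
    {α β : PathC n} (hα : IsPathP α) (hβ : IsPathP β) (hend : α 1 = β 1) {K : ℍ[ℝ]}
    (hK : K ∈ SGamma Ω₁ α ∩ SGamma Ω₁ β) : F α = F β := by
  obtain ⟨η, hηc, hη0, hrange⟩ := exists_continuous_range_eq_union hα.1 hβ.1 hend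
  have hη : PathIn Ω₁ η :=
    ⟨⟨hηc, hη0 ▸ hα.2⟩, K, (SGamma_eq_inter_of_range_eq_union Ω₁ hrange).symm ▸ hK⟩
  refine hF.apply_eq_of_nontrivial hα hβ hend ?_
  rw [← SGamma_eq_inter_of_range_eq_union Ω₂ hrange]
  exact hsp.1 η hη

end Stem

section Symmetrization

variable {n : ℕ} {Ω₁ Ω₂ : Set (Fin n → ℍ[ℝ])} {f : (Fin n → ℍ[ℝ]) → ℍ[ℝ]}

lemma scrF_psi_eq_stemOf (hsp : StemPreserving Ω₁ Ω₂) (hf : PathSlice Ω₂ f) {γ : PathC n}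
    (hγ : IsPathP γ) {K : ℍ[ℝ]} (hK : K ∈ SGamma Ω₁ γ)
    (hq : ¬ ∀ k, IsRealQ (psi K (γ 1) k)) (hfrak : frakI (psi K (γ 1)) = K) :
    scrF Ω₁ Ω₂ f (psi K (γ 1)) = stemOf Ω₂ f γ := by
  have hδ := Classical.epsilon_spec (p := fun δ : PathC n =>
    PathIn Ω₁ δ ∧ pathInSlice Ω₁ K δ ∧ psi K (δ 1) = psi K (γ 1)) ⟨γ, ⟨hγ, K, hK⟩, hK.2, rfl⟩
  rw [scrF, if_neg hq, hfrak]
  exact hsp.stem_apply_eq (Classical.epsilon_spec hf) hδ.1.1 hγ (psi_injective hK.1 hδ.2.2)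
    ⟨⟨hK.1, hδ.2.1⟩, hK⟩

lemma symmF_eq (q : Fin n → ℍ[ℝ]) (hq : frakI q * frakI q = -1) :
    symmF Ω₁ Ω₂ f q =
      ((normSq (scrF Ω₁ Ω₂ f q).1 - normSq (scrF Ω₁ Ω₂ f q).2 : ℝ) : ℍ[ℝ]) +
        (2 * (star (scrF Ω₁ Ω₂ f q).1 * (scrF Ω₁ Ω₂ f q).2).re) • frakI q := by
  set A := (scrF Ω₁ Ω₂ f q).1
  set B := (scrF Ω₁ Ω₂ f q).2
  set L := frakI q
  have hBA : star B * A + star A * B = ((2 * (star A * B).re : ℝ) : ℍ[ℝ]) := by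
    simpa only [star_mul, star_star] using Quaternion.star_add_self' (star A * B)
  calc symmF Ω₁ Ω₂ f q = (star A + L * star B) * A + L * (star A + L * star B) * B := rfl
    _ = star A * A + L * (star B * A + star A * B) + (L * L) * (star B * B) := by noncomm_ring
    _ = _ := by
      rw [hq, hBA, star_mul_self, star_mul_self, mul_coe_eq_smul, Quaternion.coe_sub]
      noncomm_ring

lemma exists_symmF_psi_eq_coe_add_smul (hsp : StemPreserving Ω₁ Ω₂) (hf : PathSlice Ω₂ f)
    {γ : PathC n} (hγ : IsPathP γ) (hz : ¬ ∀ k, (γ 1 k).im = 0) :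
    ∃ x y : ℝ, ∀ K ∈ SGamma Ω₁ γ, symmF Ω₁ Ω₂ f (psi K (γ 1)) = (x : ℍ[ℝ]) + y • K := by
  obtain ⟨c, hc, hfrak⟩ := exists_frakI_psi_eq_smul hz
  set γ' : PathC n := fun t => scaleIm c (γ t)
  have hγ' : IsPathP γ' :=
    ⟨(continuous_scaleIm c).comp hγ.1, fun k => by simp [γ', scaleIm, hγ.2 k]⟩
  have hpsi : ∀ K t, psi (c • K) (γ' t) = psi K (γ t) := fun K t => by
    rw [psi_scaleIm, smul_smul, hc, one_smul]
  set A := (stemOf Ω₂ f γ').1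
  set B := (stemOf Ω₂ f γ').2
  refine ⟨normSq A - normSq B, 2 * (star A * B).re * c, fun K hK => ?_⟩
  have hcK : c • K ∈ SGamma Ω₁ γ' := ⟨smul_mem_SQ hK.1 hc, fun t => (hpsi K t).symm ▸ hK.2 t⟩
  have hfrak' : frakI (psi (c • K) (γ' 1)) = c • K := by rw [hpsi]; exact hfrak K hK.1
  have hq : ¬ ∀ k, IsRealQ (psi (c • K) (γ' 1) k) := by
    simpa only [hpsi, isRealQ_psi_iff hK.1] using hz
  rw [← hpsi, symmF_eq _ (by rw [hfrak', ← sq]; exact hcK.1),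
    scrF_psi_eq_stemOf hsp hf hγ' hcK hq hfrak', hfrak', smul_smul]

end Symmetrization

theorem symm_zero_circle_general {n : ℕ} (Ω₁ Ω₂ : Set (Fin n → ℍ[ℝ]))
    (hsp : StemPreserving Ω₁ Ω₂)
    (f : (Fin n → ℍ[ℝ]) → ℍ[ℝ]) (hf : PathSlice Ω₂ f)
    (γ : PathC n) (hγ : PathIn Ω₁ γ) (I : ℍ[ℝ]) (hI : I ∈ SGamma Ω₁ γ)
    (h0 : symmF Ω₁ Ω₂ f (psi I (γ 1)) = 0) :
    ∀ J ∈ SGamma Ω₁ γ, symmF Ω₁ Ω₂ f (psi J (γ 1)) = 0 := by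
  intro J hJ
  by_cases hz : ∀ k, (γ 1 k).im = 0
  · rwa [psi_eq_psi_of_forall_im_eq_zero hz J I]
  obtain ⟨x, y, hxy⟩ := exists_symmF_psi_eq_coe_add_smul hsp hf hγ.1 hz
  obtain ⟨rfl, rfl⟩ : x = 0 ∧ y = 0 := coe_add_smul_injective_of_mem_SQ hI.1
    (((hxy I hI).symm.trans h0).trans (by simp) : _ = ((0 : ℝ) : ℍ[ℝ]) + (0 : ℝ) • I)
  simp [hxy J hJ]

/-- a zero of the symmetrization propagates over the whole endpoint
circle `γ^{𝕊(Ω₁,γ)}(1)`. -/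
theorem symm_zero_circle {n : ℕ} (Ω₁ Ω₂ : Set (Fin n → ℍ[ℝ]))
    (h1 : Ω₁ ⊆ HSliceCone n) (h2 : Ω₂ ⊆ HSliceCone n)
    (hrpc : RealPathConnected Ω₁) (hsp : StemPreserving Ω₁ Ω₂)
    (f : (Fin n → ℍ[ℝ]) → ℍ[ℝ]) (hf : PathSlice Ω₂ f)
    (γ : PathC n) (hγ : PathIn Ω₁ γ) (I : ℍ[ℝ]) (hI : I ∈ SGamma Ω₁ γ)
    (h0 : symmF Ω₁ Ω₂ f (psi I (γ 1)) = 0) :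
    ∀ J ∈ SGamma Ω₁ γ, symmF Ω₁ Ω₂ f (psi J (γ 1)) = 0 :=
  symm_zero_circle_general Ω₁ Ω₂ hsp f hf γ hγ I hI h0

end
end

section
/- Let Ω ⊂ ℍ_s^n be a self-stem-preserving slice-domain and let f : Ω → ℍ be weakly slice regular. Then the zero set 𝒵(f) := {q ∈ Ω : f(q) = 0} is a path-slice analytic subset of Ω. -/
/-!
Given `γ ∈ 𝒫(ℂⁿ, Ω)`, stem preservation provides two units `I ≠ J` with `γ^I, γ^J ⊂ Ω`. Near `γ`
the slices `f ∘ Ψ_I` and `f ∘ Ψ_J` determine a holomorphic stem `F = (F₁, F₂)`, and for every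
`K ∈ 𝕊(Ω, γ)` one has `f ∘ Ψ_K = F₁ + K F₂` near `γ(1)`: both sides are left `K`-holomorphic and
agree on real points, so the identity principle carries the equality from `γ(0)` along `γ`. Hence
the zeros of `f` near `γ^K(1)` lie in the zero set of the single holomorphic function `N`, the
quaternionic norm form evaluated at `F₁ + i F₂` in the complexified quaternions (the stem of the
symmetrization of `f`). If `N` vanished near `γ(1)`, it would vanish near the real point `γ(0)`,
where `N = |f|²`; then `f` would vanish on a real neighbourhood, hence, by the identity principle
and the connectedness of `Ω` in the slice topology, on all of `Ω`.
-/

open scoped Quaternion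
open Classical

attribute [local instance] Classical.propDecidable

noncomputable section

open Filter Metric Set Topology

section IdentityTheorem

variable {V W : Type*} [NormedAddCommGroup V] [NormedSpace ℂ V]
  [NormedAddCommGroup W] [NormedSpace ℂ W] [CompleteSpace W]

theorem DifferentiableOn.eqOn_zero_ball_of_eventuallyEq_zero {f : V → W} {z₀ : V} {ρ : ℝ}
    (hf : DifferentiableOn ℂ f (ball z₀ ρ)) (h₀ : f =ᶠ[𝓝 z₀] 0) : EqOn f 0 (ball z₀ ρ) := by
  intro p hp
  set ℓ : ℂ → V := fun τ => z₀ + τ • (p - z₀)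
  have hℓ : Differentiable ℂ ℓ := by fun_prop
  set D := ℓ ⁻¹' ball z₀ ρ
  have hD : Convex ℝ D := by
    intro x hx y hy a b ha hb hab
    have : ℓ (a • x + b • y) = a • ℓ x + b • ℓ y := by
      simp only [ℓ, Complex.real_smul]
      linear_combination (norm := module) hab.symm • z₀
    show ℓ (a • x + b • y) ∈ ball z₀ ρ
    exact this ▸ convex_ball z₀ ρ hx hy ha hb hab
  have hφ : AnalyticOnNhd ℂ (f ∘ ℓ) D :=
    (hf.comp hℓ.differentiableOn fun _ h => h).analyticOnNhd (isOpen_ball.preimage hℓ.continuous)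
  have hφ₀ : f ∘ ℓ =ᶠ[𝓝 0] 0 := h₀.comp_tendsto (by simpa [ℓ] using hℓ.continuous.tendsto 0)
  simpa [ℓ] using hφ.eqOn_zero_of_preconnected_of_eventuallyEq_zero hD.isPreconnected
    (by simpa [D, ℓ] using pos_of_mem_ball hp) hφ₀ (show (1 : ℂ) ∈ D by simpa [D, ℓ])

theorem DifferentiableOn.closure_setOf_eventuallyEq_zero_inter_subset {f : V → W} {U : Set V}
    (hf : DifferentiableOn ℂ f U) (hU : IsOpen U) :
    closure {z | f =ᶠ[𝓝 z] 0} ∩ U ⊆ {z | f =ᶠ[𝓝 z] 0} := by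
  rintro x ⟨hx, hxU⟩
  obtain ⟨ρ, hρ, hball⟩ := Metric.isOpen_iff.1 hU x hxU
  obtain ⟨y, hy, hxy⟩ := Metric.mem_closure_iff.1 hx (ρ / 2) (half_pos hρ)
  have hsub : ball y (ρ / 2) ⊆ ball x ρ := ball_subset_ball' (by rw [dist_comm]; linarith)
  exact Filter.mem_of_superset (isOpen_ball.mem_nhds hxy)
    ((hf.mono (hsub.trans hball)).eqOn_zero_ball_of_eventuallyEq_zero hy)

theorem DifferentiableOn.eventuallyEq_zero_of_isPreconnected {f : V → W} {U s : Set V}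
    (hf : DifferentiableOn ℂ f U) (hU : IsOpen U) (hs : IsPreconnected s) (hsU : s ⊆ U)
    {x y : V} (hx : x ∈ s) (hy : y ∈ s) (h : f =ᶠ[𝓝 x] 0) : f =ᶠ[𝓝 y] 0 :=
  hs.subset_of_closure_inter_subset isOpen_setOfPred_eventually_nhds ⟨x, hx, h⟩
    (fun _ hz => hf.closure_setOf_eventuallyEq_zero_inter_subset hU ⟨hz.1, hsU hz.2⟩) hy

theorem DifferentiableOn.eventuallyEq_zero_of_eqOn_real {ι : Type*} [Fintype ι]
    {f : (ι → ℂ) → W} {U : Set (ι → ℂ)} {x₀ : ι → ℂ}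
    (hf : DifferentiableOn ℂ f U) (hU : U ∈ 𝓝 x₀) (hx₀ : ∀ k, (x₀ k).im = 0)
    (h : ∀ᶠ x in 𝓝 x₀, (∀ k, (x k).im = 0) → f x = 0) : f =ᶠ[𝓝 x₀] 0 := by
  obtain ⟨ρ, hρ, hball⟩ := Metric.mem_nhds_iff.1 (inter_mem hU h)
  filter_upwards [ball_mem_nhds x₀ (by positivity : 0 < ρ / 3)] with z hz
  -- `z` is the value at `τ = i` of the line `τ ↦ x₀ + re (z - x₀) + τ • im (z - x₀)`,
  -- which is real for real `τ`
  set w := z - x₀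
  set a : ι → ℂ := fun k => ((w k).re : ℂ)
  set b : ι → ℂ := fun k => ((w k).im : ℂ)
  set ℓ : ℂ → ι → ℂ := fun τ => x₀ + a + τ • b
  have hℓ : Differentiable ℂ ℓ := by fun_prop
  have hw : ‖w‖ < ρ / 3 := by rwa [← dist_eq_norm]
  have ha : ‖a‖ ≤ ‖w‖ := (pi_norm_le_iff_of_nonneg (norm_nonneg _)).2 fun k => by
    simpa [a] using (Complex.abs_re_le_norm (w k)).trans (norm_le_pi_norm w k)
  have hb : ‖b‖ ≤ ‖w‖ := (pi_norm_le_iff_of_nonneg (norm_nonneg _)).2 fun k => by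
    simpa [b] using (Complex.abs_im_le_norm (w k)).trans (norm_le_pi_norm w k)
  have hℓball : MapsTo ℓ (ball 0 2) (ball x₀ ρ) := by
    intro τ hτ
    rw [mem_ball_zero_iff] at hτ
    rw [mem_ball, dist_eq_norm]
    calc ‖ℓ τ - x₀‖ = ‖a + τ • b‖ := by simp [ℓ, add_assoc]
      _ ≤ ‖a‖ + ‖τ‖ * ‖b‖ := (norm_add_le _ _).trans (by rw [norm_smul])
      _ < ρ := by nlinarith [norm_nonneg τ, norm_nonneg b]
  have hφ : AnalyticOnNhd ℂ (f ∘ ℓ) (ball 0 2) :=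
    (hf.comp hℓ.differentiableOn fun τ hτ => (hball (hℓball hτ)).1).analyticOnNhd isOpen_ball
  have hreal : ∃ᶠ τ in 𝓝[≠] (0 : ℂ), (f ∘ ℓ) τ = 0 := by
    have hofReal : Tendsto ((↑) : ℝ → ℂ) (𝓝[≠] 0) (𝓝[≠] 0) := by
      have := (Complex.continuous_ofReal.continuousWithinAt (x := 0)).tendsto_nhdsWithin
        (s := {0}ᶜ) (t := {0}ᶜ) fun t ht => Complex.ofReal_ne_zero.2 ht
      rwa [Complex.ofReal_zero] at this
    refine hofReal.frequently (Eventually.frequently ?_)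
    filter_upwards [nhdsWithin_le_nhds (ball_mem_nhds (0 : ℝ) two_pos)] with t ht
    have ht' : (t : ℂ) ∈ ball (0 : ℂ) 2 := by simpa using ht
    exact (hball (hℓball ht')).2 fun k => by simp [ℓ, a, b, hx₀ k]
  have hℓI : ℓ Complex.I = z := by
    funext k
    apply Complex.ext <;> simp [ℓ, a, b, w, hx₀ k]
  simpa [hℓI] using hφ.eqOn_zero_of_preconnected_of_frequently_eq_zero
    (convex_ball (0 : ℂ) 2).isPreconnected (mem_ball_self two_pos) hreal
    (show Complex.I ∈ ball (0 : ℂ) 2 by simp)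

end IdentityTheorem

theorem smul_eq_re_smul_add_im_smul {E : Type*} [AddCommGroup E] [Module ℂ E] (c : ℂ) (v : E) :
    c • v = c.re • v + c.im • Complex.I • v := by
  conv_lhs => rw [← Complex.re_add_im c]
  rw [add_smul, mul_smul, Complex.coe_smul, Complex.coe_smul]

section JHolomorphic

variable {V F G : Type*} [NormedAddCommGroup V] [NormedSpace ℂ V]
  [NormedAddCommGroup F] [NormedSpace ℝ F] [NormedAddCommGroup G]

/-- `J = (K * ·)` gives the left `K`-holomorphic functions, `J = sigmaAct` the holomorphic stems. -/
def IsJHolomorphicOn (J : F → F) (U : Set V) (h : V → F) : Prop :=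
  ∀ z ∈ U, ∃ L : V →L[ℝ] F, HasFDerivAt h L z ∧ ∀ v, L (Complex.I • v) = J (L v)

theorem IsJHolomorphicOn.mono {J : F → F} {U U' : Set V} {h : V → F}
    (hh : IsJHolomorphicOn J U h) (hU' : U' ⊆ U) : IsJHolomorphicOn J U' h :=
  fun z hz => hh z (hU' hz)

theorem IsJHolomorphicOn.sub {J : F → F} {U : Set V} {h₁ h₂ : V → F}
    (hJ : ∀ p q, J (p - q) = J p - J q) (hh₁ : IsJHolomorphicOn J U h₁)
    (hh₂ : IsJHolomorphicOn J U h₂) : IsJHolomorphicOn J U fun z => h₁ z - h₂ z := by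
  intro z hz
  obtain ⟨L₁, hL₁, hJ₁⟩ := hh₁ z hz
  obtain ⟨L₂, hL₂, hJ₂⟩ := hh₂ z hz
  exact ⟨L₁ - L₂, hL₁.sub hL₂, fun v => by simp [hJ₁, hJ₂, hJ]⟩

theorem IsJHolomorphicOn.clm_comp [NormedSpace ℝ G] {J : F → F} {J' : G → G} {U : Set V}
    {h : V → F} (hh : IsJHolomorphicOn J U h) (Λ : F →L[ℝ] G) (hΛ : ∀ p, Λ (J p) = J' (Λ p)) :
    IsJHolomorphicOn J' U fun z => Λ (h z) := by
  intro z hz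
  obtain ⟨L, hL, hLJ⟩ := hh z hz
  exact ⟨Λ.comp L, Λ.hasFDerivAt.comp z hL, fun v => by simp [hLJ, hΛ]⟩

theorem IsJHolomorphicOn.differentiableOn [NormedSpace ℂ G] {U : Set V} {h : V → G}
    (hh : IsJHolomorphicOn (Complex.I • ·) U h) : DifferentiableOn ℂ h U := by
  intro z hz
  obtain ⟨L, hL, hLI⟩ := hh z hz
  have hsmul : ∀ (c : ℂ) (v : V), L (c • v) = c • L v := by
    intro c v
    rw [smul_eq_re_smul_add_im_smul c v, map_add, map_smul, map_smul, hLI,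
      ← smul_eq_re_smul_add_im_smul]
  let L' : V →L[ℂ] G := { L with map_smul' := hsmul }
  exact (hasFDerivAt_of_restrictScalars ℝ hL (f' := L') rfl).differentiableAt.differentiableWithinAt

end JHolomorphic

section ImaginaryUnits

variable {I : ℍ[ℝ]}

theorem mul_self_of_mem_SQ (hI : I ∈ SQ) : I * I = -1 := by
  rw [← sq]; exact hI

theorem normSq_of_mem_SQ (hI : I ∈ SQ) : Quaternion.normSq I = 1 := by
  refine (pow_eq_one_iff_of_nonneg Quaternion.normSq_nonneg two_ne_zero).1 ?_
  rw [← map_pow, show I ^ 2 = -1 from hI, Quaternion.normSq_neg, map_one]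

theorem re_of_mem_SQ (hI : I ∈ SQ) : I.re = 0 := by
  have h : I ^ 2 = -1 := hI
  rw [← Quaternion.sq_eq_neg_normSq, normSq_of_mem_SQ hI, h, Quaternion.coe_one]

end ImaginaryUnits

/-- The coordinates in `ℂ⁴` of `p.1 + i p.2` in the complexified quaternions `ℍ ⊗ ℂ`. -/
def complexCoords : ℍ[ℝ] × ℍ[ℝ] →L[ℝ] (Fin 4 → ℂ) :=
  LinearMap.toContinuousLinearMap
    { toFun := fun p =>
        ![⟨p.1.re, p.2.re⟩, ⟨p.1.imI, p.2.imI⟩, ⟨p.1.imJ, p.2.imJ⟩, ⟨p.1.imK, p.2.imK⟩]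
      map_add' := fun p q => by funext j; fin_cases j <;> apply Complex.ext <;> simp
      map_smul' := fun c p => by funext j; fin_cases j <;> apply Complex.ext <;> simp }

theorem complexCoords_apply (p : ℍ[ℝ] × ℍ[ℝ]) : complexCoords p =
    ![⟨p.1.re, p.2.re⟩, ⟨p.1.imI, p.2.imI⟩, ⟨p.1.imJ, p.2.imJ⟩, ⟨p.1.imK, p.2.imK⟩] := rfl

theorem complexCoords_sigmaAct (p : ℍ[ℝ] × ℍ[ℝ]) :
    complexCoords (sigmaAct p) = Complex.I • complexCoords p := by
  funext j; fin_cases j <;> apply Complex.ext <;> simp [complexCoords_apply, sigmaAct]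

theorem complexCoords_eq_zero_iff {p : ℍ[ℝ] × ℍ[ℝ]} : complexCoords p = 0 ↔ p = 0 := by
  refine ⟨fun h => ?_, fun h => by simp [h]⟩
  have h0 := congrFun h 0
  have h1 := congrFun h 1
  have h2 := congrFun h 2
  have h3 := congrFun h 3
  simp only [complexCoords_apply, Complex.ext_iff] at h0 h1 h2 h3
  ext <;> simp_all

/-- A `ℂ`-linear chart of `ℍ` with complex structure `(K * ·)`. -/
def leftCoords (K : ℍ[ℝ]) : ℍ[ℝ] →L[ℝ] (Fin 4 → ℂ) :=
  complexCoords.comp ((ContinuousLinearMap.id ℝ ℍ[ℝ]).prod (-ContinuousLinearMap.mul ℝ ℍ[ℝ] K))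

theorem leftCoords_mul {K : ℍ[ℝ]} (hK : K * K = -1) (p : ℍ[ℝ]) :
    leftCoords K (K * p) = Complex.I • leftCoords K p := by
  have h : ((ContinuousLinearMap.id ℝ ℍ[ℝ]).prod (-ContinuousLinearMap.mul ℝ ℍ[ℝ] K)) (K * p) =
      sigmaAct (((ContinuousLinearMap.id ℝ ℍ[ℝ]).prod (-ContinuousLinearMap.mul ℝ ℍ[ℝ] K)) p) := by
    simp [sigmaAct, ← mul_assoc, hK]
  rw [leftCoords, ContinuousLinearMap.comp_apply, h, complexCoords_sigmaAct]
  rfl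

theorem leftCoords_eq_zero_iff {K p : ℍ[ℝ]} : leftCoords K p = 0 ↔ p = 0 := by
  simp +contextual [leftCoords, complexCoords_eq_zero_iff]

section LeftHolomorphic

variable {V : Type*} [NormedAddCommGroup V] [NormedSpace ℂ V] {K : ℍ[ℝ]}

theorem eventuallyEq_zero_iff_leftCoords {α : Type*} {h : α → ℍ[ℝ]} {l : Filter α} :
    h =ᶠ[l] 0 ↔ (fun z => leftCoords K (h z)) =ᶠ[l] 0 :=
  eventually_congr (Eventually.of_forall fun z => by simp [leftCoords_eq_zero_iff])

theorem IsJHolomorphicOn.differentiableOn_leftCoords {U : Set V} {h : V → ℍ[ℝ]}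
    (hK : K * K = -1) (hh : IsJHolomorphicOn (K * ·) U h) :
    DifferentiableOn ℂ (fun z => leftCoords K (h z)) U :=
  (hh.clm_comp (leftCoords K) (leftCoords_mul hK)).differentiableOn

theorem IsJHolomorphicOn.eventuallyEq_zero_of_eqOn_real {ι : Type*} [Fintype ι]
    {U : Set (ι → ℂ)} {h : (ι → ℂ) → ℍ[ℝ]} {x₀ : ι → ℂ} (hK : K * K = -1)
    (hh : IsJHolomorphicOn (K * ·) U h) (hU : U ∈ 𝓝 x₀) (hx₀ : ∀ k, (x₀ k).im = 0)
    (h₀ : ∀ᶠ x in 𝓝 x₀, (∀ k, (x k).im = 0) → h x = 0) : h =ᶠ[𝓝 x₀] 0 :=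
  eventuallyEq_zero_iff_leftCoords.2 <|
    (hh.differentiableOn_leftCoords hK).eventuallyEq_zero_of_eqOn_real hU hx₀
      (h₀.mono fun x hx hre => by simp [hx hre])

theorem IsJHolomorphicOn.eventuallyEq_zero_of_isPreconnected {U s : Set V} {h : V → ℍ[ℝ]}
    (hK : K * K = -1) (hh : IsJHolomorphicOn (K * ·) U h) (hU : IsOpen U) (hs : IsPreconnected s)
    (hsU : s ⊆ U) {x y : V} (hx : x ∈ s) (hy : y ∈ s) (h₀ : h =ᶠ[𝓝 x] 0) : h =ᶠ[𝓝 y] 0 :=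
  eventuallyEq_zero_iff_leftCoords.2 <|
    (hh.differentiableOn_leftCoords hK).eventuallyEq_zero_of_isPreconnected hU hs hsU hx hy
      (eventuallyEq_zero_iff_leftCoords.1 h₀)

theorem IsJHolomorphicOn.closure_setOf_eventuallyEq_zero_inter_subset {U : Set V}
    {h : V → ℍ[ℝ]} (hK : K * K = -1) (hh : IsJHolomorphicOn (K * ·) U h) (hU : IsOpen U) :
    closure {z | h =ᶠ[𝓝 z] 0} ∩ U ⊆ {z | h =ᶠ[𝓝 z] 0} := by
  simp only [eventuallyEq_zero_iff_leftCoords (K := K)]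
  exact (hh.differentiableOn_leftCoords hK).closure_setOf_eventuallyEq_zero_inter_subset hU

end LeftHolomorphic

section Slices

variable {n : ℕ} {I J : ℍ[ℝ]}

theorem psi_of_real {x : Fin n → ℂ} (hx : ∀ k, (x k).im = 0) (I J : ℍ[ℝ]) :
    psi I x = psi J x := by
  funext k; simp [psi, hx k]

theorem psi_neg (I : ℍ[ℝ]) (z : Fin n → ℂ) : psi (-I) z = psi I (star z) := by
  funext k; simp [psi]

theorem norm_coe_re_add_im_smul (hI : I ∈ SQ) (c : ℂ) : ‖(c.re : ℍ[ℝ]) + c.im • I‖ = ‖c‖ := by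
  refine (sq_eq_sq₀ (norm_nonneg _) (norm_nonneg _)).1 ?_
  rw [sq, ← Quaternion.normSq_eq_norm_mul_self, Complex.sq_norm, Complex.normSq_apply,
    Quaternion.normSq_add, Quaternion.normSq_coe, Quaternion.normSq_smul, normSq_of_mem_SQ hI]
  simp [re_of_mem_SQ hI]
  ring

theorem isometry_psi (hI : I ∈ SQ) : Isometry (psi (n := n) I) := by
  have hι : Isometry fun c : ℂ => (c.re : ℍ[ℝ]) + c.im • I := Isometry.of_dist_eq fun c d => by
    rw [dist_eq_norm, dist_eq_norm, ← norm_coe_re_add_im_smul hI (c - d)]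
    congr 1
    simp only [Complex.sub_re, Complex.sub_im, Quaternion.coe_sub, sub_smul]
    abel
  exact hι.postcomp_pi

theorem eq_or_eq_neg_of_psi_eq (hI : I ∈ SQ) (hJ : J ∈ SQ) {z u : Fin n → ℂ} {k : Fin n}
    (hu : (u k).im ≠ 0) (h : psi J u = psi I z) : J = I ∨ J = -I := by
  have hk := congrFun h k
  have hre : (u k).re = (z k).re := by
    simpa [psi, re_of_mem_SQ hI, re_of_mem_SQ hJ] using congrArg QuaternionAlgebra.re hk
  have him : (u k).im • J = (z k).im • I := by
    simpa [psi, hre] using hk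
  have hsq : (u k).im ^ 2 = (z k).im ^ 2 := by
    simpa [Quaternion.normSq_smul, normSq_of_mem_SQ hI, normSq_of_mem_SQ hJ]
      using congrArg Quaternion.normSq him
  rcases sq_eq_sq_iff_eq_or_eq_neg.1 hsq with h' | h'
  · exact Or.inl (smul_right_injective _ hu (by beta_reduce; rw [him, h']))
  · refine Or.inr (smul_right_injective _ hu ?_)
    beta_reduce
    rw [him, h', neg_smul, smul_neg, neg_neg]

end Slices

theorem map_I_smul_of_coordinates {n : ℕ} {L : (Fin n → ℂ) →L[ℝ] ℍ[ℝ]} {K : ℍ[ℝ]}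
    (hK : K * K = -1) (h : ∀ ℓ, L (Pi.single ℓ 1) + K * L (Pi.single ℓ Complex.I) = 0)
    (v : Fin n → ℂ) : L (Complex.I • v) = K * L v := by
  have hI : ∀ ℓ, K * L (Pi.single ℓ Complex.I) = -L (Pi.single ℓ 1) := fun ℓ =>
    eq_neg_of_add_eq_zero_right (h ℓ)
  have h1 : ∀ ℓ, K * L (Pi.single ℓ 1) = L (Pi.single ℓ Complex.I) := fun ℓ => by
    rw [eq_neg_of_add_eq_zero_left (h ℓ), mul_neg, ← mul_assoc, hK, neg_one_mul, neg_neg]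
  have key : (L : (Fin n → ℂ) →ₗ[ℝ] ℍ[ℝ]).comp
      ((LinearMap.lsmul ℂ (Fin n → ℂ) Complex.I).restrictScalars ℝ) =
      (LinearMap.mulLeft ℝ K).comp (L : (Fin n → ℂ) →ₗ[ℝ] ℍ[ℝ]) := by
    refine (Pi.basis fun _ : Fin n => Complex.basisOneI).ext fun ⟨ℓ, j⟩ => ?_
    fin_cases j
    · simp [← Pi.single_smul', h1]
    · simp [← Pi.single_smul', hI, Pi.single_neg]
  exact LinearMap.congr_fun key v

section SliceRegular

variable {n : ℕ} {Ω : Set (Fin n → ℍ[ℝ])} {f : (Fin n → ℍ[ℝ]) → ℍ[ℝ]} {I : ℍ[ℝ]}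

theorem SliceRegular.isJHolomorphicOn (hf : SliceRegular Ω f) (hΩ : SliceOpen Ω) (hI : I ∈ SQ) :
    IsJHolomorphicOn (I * ·) {z | psi I z ∈ Ω} fun z => f (psi I z) := by
  intro z hz
  obtain ⟨hdiff, hcr⟩ := hf I hI z hz
  simp only [fderivWithin_of_isOpen (hΩ I hI) hz] at hcr
  exact ⟨_, (hdiff.differentiableAt ((hΩ I hI).mem_nhds hz)).hasFDerivAt,
    map_I_smul_of_coordinates (mul_self_of_mem_SQ hI) hcr⟩

/-- A point can lie on several slices (on all of them if it is real), so vanishing is required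
on each of them. -/
def sliceVanishingSet (Ω : Set (Fin n → ℍ[ℝ])) (f : (Fin n → ℍ[ℝ]) → ℍ[ℝ]) :
    Set (Fin n → ℍ[ℝ]) :=
  {q | q ∈ Ω ∧ ∀ J ∈ SQ, ∀ u, psi J u = q → (fun w => f (psi J w)) =ᶠ[𝓝 u] 0}

theorem psi_mem_sliceVanishingSet_iff (hf : SliceRegular Ω f) (hΩ : SliceOpen Ω) (hI : I ∈ SQ)
    {z : Fin n → ℂ} (hz : psi I z ∈ Ω) :
    psi I z ∈ sliceVanishingSet Ω f ↔ (fun w => f (psi I w)) =ᶠ[𝓝 z] 0 := by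
  refine ⟨fun h => h.2 I hI z rfl, fun h => ⟨hz, fun J hJ u hu => ?_⟩⟩
  by_cases hreal : ∀ k, (u k).im = 0
  · obtain rfl : z = u := (isometry_psi hI).injective (hu ▸ psi_of_real hreal I J).symm
    refine (hf.isJHolomorphicOn hΩ hJ).eventuallyEq_zero_of_eqOn_real (mul_self_of_mem_SQ hJ)
      ((hΩ J hJ).mem_nhds (by simpa [hu] using hz)) hreal ?_
    filter_upwards [h] with x hx hxre
    rwa [psi_of_real hxre J I]
  · obtain ⟨k, hk⟩ := not_forall.1 hreal
    rcases eq_or_eq_neg_of_psi_eq hI hJ hk hu with rfl | rfl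
    · obtain rfl := (isometry_psi hI).injective hu
      exact h
    · rw [psi_neg] at hu
      obtain rfl := (isometry_psi hI).injective hu
      simp_rw [psi_neg]
      exact h.comp_tendsto (continuous_star.tendsto u)

theorem sliceOpen_sliceVanishingSet (hf : SliceRegular Ω f) (hΩ : SliceOpen Ω) :
    SliceOpen (sliceVanishingSet Ω f) := by
  intro I hI
  refine isOpen_iff_mem_nhds.2 fun z hz => ?_
  filter_upwards [((psi_mem_sliceVanishingSet_iff hf hΩ hI hz.1).1 hz).eventuallyEq_nhds,
    (hΩ I hI).mem_nhds hz.1] with w hw hwΩ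
  exact (psi_mem_sliceVanishingSet_iff hf hΩ hI hwΩ).2 hw

theorem sliceOpen_diff_sliceVanishingSet (hf : SliceRegular Ω f) (hΩ : SliceOpen Ω) :
    SliceOpen (Ω \ sliceVanishingSet Ω f) := by
  intro I hI
  have hcl := (hf.isJHolomorphicOn hΩ hI).closure_setOf_eventuallyEq_zero_inter_subset
    (mul_self_of_mem_SQ hI) (hΩ I hI)
  have : {z | psi I z ∈ Ω \ sliceVanishingSet Ω f} =
      {z | psi I z ∈ Ω} \ closure {z | (fun w => f (psi I w)) =ᶠ[𝓝 z] 0} := by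
    ext z
    refine ⟨fun ⟨hzΩ, hzZ⟩ => ⟨hzΩ, fun hz => hzZ ?_⟩, fun ⟨hzΩ, hz⟩ => ⟨hzΩ, fun hzZ => hz ?_⟩⟩
    · exact (psi_mem_sliceVanishingSet_iff hf hΩ hI hzΩ).2 (hcl ⟨hz, hzΩ⟩)
    · exact subset_closure ((psi_mem_sliceVanishingSet_iff hf hΩ hI hzΩ).1 hzZ)
  rw [this]
  exact (hΩ I hI).sdiff isClosed_closure

theorem SliceRegular.eq_zero_of_eventuallyEq_zero (hf : SliceRegular Ω f) (hΩ : Ω ⊆ HSliceCone n)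
    (hdom : SliceDomain Ω) (hI : I ∈ SQ) {z : Fin n → ℂ} (hz : psi I z ∈ Ω)
    (h : (fun w => f (psi I w)) =ᶠ[𝓝 z] 0) : ∀ q ∈ Ω, f q = 0 := by
  have hsub : Ω ⊆ sliceVanishingSet Ω f :=
    @IsPreconnected.subset_left_of_subset_union _ (sliceTop n) _ _ _
      (sliceOpen_sliceVanishingSet hf hdom.1) (sliceOpen_diff_sliceVanishingSet hf hdom.1)
      disjoint_sdiff_right (fun q hq => (_root_.em _).imp id fun hq' => ⟨hq, hq'⟩)
      ⟨psi I z, hz, (psi_mem_sliceVanishingSet_iff hf hdom.1 hI hz).2 h⟩ hdom.2.2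
  intro q hq
  obtain ⟨J, hJ, u, rfl⟩ : ∃ J ∈ SQ, ∃ u, psi J u = q := by simpa [HSliceCone] using hΩ hq
  exact ((psi_mem_sliceVanishingSet_iff hf hdom.1 hJ hq).1 (hsub hq)).self_of_nhds

end SliceRegular

section Stems

variable {I J K : ℍ[ℝ]}

def evalStem (K : ℍ[ℝ]) : ℍ[ℝ] × ℍ[ℝ] →L[ℝ] ℍ[ℝ] :=
  ContinuousLinearMap.fst ℝ ℍ[ℝ] ℍ[ℝ] +
    (ContinuousLinearMap.mul ℝ ℍ[ℝ] K).comp (ContinuousLinearMap.snd ℝ ℍ[ℝ] ℍ[ℝ])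

@[simp]
theorem evalStem_apply (p : ℍ[ℝ] × ℍ[ℝ]) : evalStem K p = p.1 + K * p.2 := rfl

theorem evalStem_sigmaAct (hK : K * K = -1) (p : ℍ[ℝ] × ℍ[ℝ]) :
    evalStem K (sigmaAct p) = K * evalStem K p := by
  simp [sigmaAct, mul_add, ← mul_assoc, hK, add_comm]

theorem eq_sigmaAct_of_evalStem (hI : I * I = -1) (hJ : J * J = -1) (hIJ : I ≠ J)
    {p p' : ℍ[ℝ] × ℍ[ℝ]} (h₁ : evalStem I p' = I * evalStem I p)
    (h₂ : evalStem J p' = J * evalStem J p) : p' = sigmaAct p := by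
  simp only [evalStem_apply] at h₁ h₂
  have k₁ : (p'.1 + p.2) + I * (p'.2 - p.1) = 0 := calc
    _ = (p'.1 + I * p'.2) - I * (p.1 + I * p.2) + (1 + I * I) * p.2 := by noncomm_ring
    _ = 0 := by rw [h₁, hI]; noncomm_ring
  have k₂ : (p'.1 + p.2) + J * (p'.2 - p.1) = 0 := calc
    _ = (p'.1 + J * p'.2) - J * (p.1 + J * p.2) + (1 + J * J) * p.2 := by noncomm_ring
    _ = 0 := by rw [h₂, hJ]; noncomm_ring
  have h₂₁ : p'.2 - p.1 = 0 := by
    refine (mul_eq_zero.1 ?_).resolve_left (sub_ne_zero.2 hIJ)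
    calc (I - J) * (p'.2 - p.1) = ((p'.1 + p.2) + I * (p'.2 - p.1)) -
        ((p'.1 + p.2) + J * (p'.2 - p.1)) := by noncomm_ring
      _ = 0 := by rw [k₁, k₂, sub_zero]
  rw [h₂₁, mul_zero, add_zero] at k₁
  exact Prod.ext (eq_neg_of_add_eq_zero_left k₁) (sub_eq_zero.1 h₂₁)

def stemOfSlices (I J : ℍ[ℝ]) : ℍ[ℝ] × ℍ[ℝ] →L[ℝ] ℍ[ℝ] × ℍ[ℝ] :=
  let B := (I - J)⁻¹ • (ContinuousLinearMap.fst ℝ ℍ[ℝ] ℍ[ℝ] - ContinuousLinearMap.snd ℝ ℍ[ℝ] ℍ[ℝ])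
  (ContinuousLinearMap.fst ℝ ℍ[ℝ] ℍ[ℝ] - I • B).prod B

theorem stemOfSlices_apply (p : ℍ[ℝ] × ℍ[ℝ]) : stemOfSlices I J p =
    (p.1 - I * ((I - J)⁻¹ * (p.1 - p.2)), (I - J)⁻¹ * (p.1 - p.2)) := rfl

theorem evalStem_stemOfSlices_left (p : ℍ[ℝ] × ℍ[ℝ]) : evalStem I (stemOfSlices I J p) = p.1 := by
  simp [stemOfSlices_apply]

theorem evalStem_stemOfSlices_right (hIJ : I ≠ J) (p : ℍ[ℝ] × ℍ[ℝ]) :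
    evalStem J (stemOfSlices I J p) = p.2 := by
  calc evalStem J (stemOfSlices I J p) = p.1 - (I - J) * ((I - J)⁻¹ * (p.1 - p.2)) := by
        rw [stemOfSlices_apply, evalStem_apply]; noncomm_ring
    _ = p.2 := by rw [mul_inv_cancel_left₀ (sub_ne_zero.2 hIJ), sub_sub_cancel]

/-- The complexified norm form of `p.1 + i p.2 ∈ ℍ ⊗ ℂ`; on the stem of `f` it is the stem of the
symmetrization of `f`, see `stemNormSq_eq`. -/
def stemNormSq (p : ℍ[ℝ] × ℍ[ℝ]) : ℂ := ∑ j, complexCoords p j ^ 2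

theorem stemNormSq_eq (p : ℍ[ℝ] × ℍ[ℝ]) : stemNormSq p =
    ⟨Quaternion.normSq p.1 - Quaternion.normSq p.2, 2 * (p.1 * star p.2).re⟩ := by
  apply Complex.ext <;>
    simp [stemNormSq, complexCoords_apply, Fin.sum_univ_four, sq, Quaternion.normSq_def'] <;> ring

theorem stemNormSq_eq_zero_of_evalStem_eq_zero (hK : K ∈ SQ) {p : ℍ[ℝ] × ℍ[ℝ]}
    (h : evalStem K p = 0) : stemNormSq p = 0 := by
  have hp : p.1 = -(K * p.2) := eq_neg_of_add_eq_zero_left h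
  rw [stemNormSq_eq, hp, Quaternion.normSq_neg, map_mul, normSq_of_mem_SQ hK, one_mul, neg_mul,
    mul_assoc, Quaternion.self_mul_star]
  apply Complex.ext <;> simp [re_of_mem_SQ hK]

theorem stemNormSq_mk_zero_eq_zero_iff {a : ℍ[ℝ]} : stemNormSq (a, 0) = 0 ↔ a = 0 := by
  simp [stemNormSq_eq, Complex.ext_iff]

theorem IsJHolomorphicOn.differentiableOn_stemNormSq {V : Type*} [NormedAddCommGroup V]
    [NormedSpace ℂ V] {U : Set V} {F : V → ℍ[ℝ] × ℍ[ℝ]} (hF : IsJHolomorphicOn sigmaAct U F) :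
    DifferentiableOn ℂ (fun z => stemNormSq (F z)) U := by
  have hc := (hF.clm_comp complexCoords complexCoords_sigmaAct).differentiableOn
  exact DifferentiableOn.fun_sum fun j _ =>
    ((differentiable_apply j).comp_differentiableOn hc).pow 2

end Stems

section LocalStem

variable {n : ℕ} {Ω : Set (Fin n → ℍ[ℝ])} {f : (Fin n → ℍ[ℝ]) → ℍ[ℝ]} {I J K : ℍ[ℝ]}

def localStem (f : (Fin n → ℍ[ℝ]) → ℍ[ℝ]) (I J : ℍ[ℝ]) (z : Fin n → ℂ) : ℍ[ℝ] × ℍ[ℝ] :=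
  stemOfSlices I J (f (psi I z), f (psi J z))

theorem localStem_of_real {x : Fin n → ℂ} (hx : ∀ k, (x k).im = 0) :
    localStem f I J x = (f (psi K x), 0) := by
  simp [localStem, stemOfSlices_apply, psi_of_real hx J I, psi_of_real hx K I]

theorem isJHolomorphicOn_localStem (hf : SliceRegular Ω f) (hΩ : SliceOpen Ω) (hI : I ∈ SQ)
    (hJ : J ∈ SQ) (hIJ : I ≠ J) :
    IsJHolomorphicOn sigmaAct ({z | psi I z ∈ Ω} ∩ {z | psi J z ∈ Ω}) (localStem f I J) := by
  intro z hz
  obtain ⟨L₁, hL₁, hcr₁⟩ := hf.isJHolomorphicOn hΩ hI z hz.1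
  obtain ⟨L₂, hL₂, hcr₂⟩ := hf.isJHolomorphicOn hΩ hJ z hz.2
  refine ⟨(stemOfSlices I J).comp (L₁.prod L₂),
    (stemOfSlices I J).hasFDerivAt.comp z (hL₁.prodMk hL₂), fun v => ?_⟩
  apply eq_sigmaAct_of_evalStem (mul_self_of_mem_SQ hI) (mul_self_of_mem_SQ hJ) hIJ <;>
    simp only [ContinuousLinearMap.comp_apply, ContinuousLinearMap.prod_apply, hcr₁, hcr₂,
      evalStem_stemOfSlices_left, evalStem_stemOfSlices_right hIJ]

theorem eventuallyEq_evalStem_localStem (hf : SliceRegular Ω f) (hΩ : SliceOpen Ω)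
    {γ : PathC n} (hγ : PathIn Ω γ) (hI : I ∈ SGamma Ω γ) (hJ : J ∈ SGamma Ω γ) (hIJ : I ≠ J)
    (hK : K ∈ SGamma Ω γ) :
    (fun z => f (psi K z)) =ᶠ[𝓝 (γ 1)] fun z => evalStem K (localStem f I J z) := by
  set U := {z | psi K z ∈ Ω} ∩ ({z | psi I z ∈ Ω} ∩ {z | psi J z ∈ Ω})
  have hU : IsOpen U := (hΩ K hK.1).inter ((hΩ I hI.1).inter (hΩ J hJ.1))
  have hγU : range γ ⊆ U := range_subset_iff.2 fun t => ⟨hK.2 t, hI.2 t, hJ.2 t⟩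
  have hK2 := mul_self_of_mem_SQ hK.1
  have hh : IsJHolomorphicOn (K * ·) U fun z => f (psi K z) - evalStem K (localStem f I J z) :=
    ((hf.isJHolomorphicOn hΩ hK.1).mono inter_subset_left).sub (fun _ _ => mul_sub _ _ _)
      (((isJHolomorphicOn_localStem hf hΩ hI.1 hJ.1 hIJ).clm_comp (evalStem K)
        (evalStem_sigmaAct hK2)).mono inter_subset_right)
  have h₀ := hh.eventuallyEq_zero_of_eqOn_real hK2 (hU.mem_nhds (hγU ⟨0, rfl⟩)) hγ.1.2
    (Eventually.of_forall fun x hx => by simp [localStem_of_real (K := K) hx])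
  exact (hh.eventuallyEq_zero_of_isPreconnected hK2 hU (isPreconnected_range hγ.1.1) hγU
    ⟨0, rfl⟩ ⟨1, rfl⟩ h₀).mono fun z hz => sub_eq_zero.1 hz

theorem not_eventuallyEq_stemNormSq_localStem (hf : SliceRegular Ω f) (hΩ : Ω ⊆ HSliceCone n)
    (hdom : SliceDomain Ω) (hne : ∃ q ∈ Ω, f q ≠ 0) {γ : PathC n} (hγ : PathIn Ω γ)
    (hI : I ∈ SGamma Ω γ) (hJ : J ∈ SGamma Ω γ) (hIJ : I ≠ J) :
    ¬ (fun z => stemNormSq (localStem f I J z)) =ᶠ[𝓝 (γ 1)] 0 := by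
  intro h₁
  obtain ⟨q, hq, hfq⟩ := hne
  have hN := (isJHolomorphicOn_localStem hf hdom.1 hI.1 hJ.1 hIJ).differentiableOn_stemNormSq
  have h₀ := hN.eventuallyEq_zero_of_isPreconnected ((hdom.1 I hI.1).inter (hdom.1 J hJ.1))
    (isPreconnected_range hγ.1.1) (range_subset_iff.2 fun t => ⟨hI.2 t, hJ.2 t⟩)
    ⟨1, rfl⟩ ⟨0, rfl⟩ h₁
  -- on real points the stem is `(f, 0)`, whose norm form is `|f|²`
  have hslice : (fun z => f (psi I z)) =ᶠ[𝓝 (γ 0)] 0 :=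
    (hf.isJHolomorphicOn hdom.1 hI.1).eventuallyEq_zero_of_eqOn_real (mul_self_of_mem_SQ hI.1)
      ((hdom.1 I hI.1).mem_nhds (hI.2 0)) hγ.1.2 <| h₀.mono fun x hx hxre =>
        stemNormSq_mk_zero_eq_zero_iff.1 (by rwa [← localStem_of_real hxre])
  exact hfq (hf.eq_zero_of_eventuallyEq_zero hΩ hdom hI.1 (hI.2 0) hslice q hq)

end LocalStem

theorem isComplexAnalyticSubset_inter_setOf_eq_zero {n : ℕ} {U : Set (Fin n → ℂ)}
    {h : (Fin n → ℂ) → ℂ} (hU : IsOpen U) (hh : DifferentiableOn ℂ h U) :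
    IsComplexAnalyticSubset U (U ∩ {z | h z = 0}) :=
  ⟨inter_subset_left, fun z hz => ⟨U, subset_rfl, hU, hz, 1, fun _ => h, fun _ => hh, by
    ext w; simp [and_comm]⟩⟩

/-- the zero set of a weakly slice regular function on a
self-stem-preserving slice-domain is path-slice analytic. -/
theorem zeroSet_analytic {n : ℕ} (Ω : Set (Fin n → ℍ[ℝ])) (hΩ : Ω ⊆ HSliceCone n)
    (hdom : SliceDomain Ω) (hssp : SelfStemPreserving Ω)
    (f : (Fin n → ℍ[ℝ]) → ℍ[ℝ]) (hf : SliceRegular Ω f) :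
    PathSliceAnalytic Ω {q ∈ Ω | f q = 0} := by
  by_cases hzero : ∀ q ∈ Ω, f q = 0
  · exact Or.inl (Set.ext fun q => ⟨And.left, fun hq => ⟨hq, hzero q hq⟩⟩)
  push Not at hzero
  refine Or.inr fun γ hγ => ?_
  obtain ⟨I, hI, J, hJ, hIJ⟩ := hssp.2.1 γ hγ
  set N := fun z => stemNormSq (localStem f I J z)
  have hN := (isJHolomorphicOn_localStem hf hdom.1 hI.1 hJ.1 hIJ).differentiableOn_stemNormSq
  obtain ⟨r, hr, hball⟩ := Metric.isOpen_iff.1 ((hdom.1 I hI.1).inter (hdom.1 J hJ.1)) (γ 1)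
    ⟨hI.2 1, hJ.2 1⟩
  have hslices : ∀ K ∈ SGamma Ω γ, ∃ δ > 0, ∀ z ∈ ball (γ 1) δ,
      f (psi K z) = evalStem K (localStem f I J z) := fun K hK =>
    Metric.eventually_nhds_iff_ball.1 (eventuallyEq_evalStem_localStem hf hdom.1 hγ hI hJ hIJ hK)
  choose! δ hδ hδslice using hslices
  refine ⟨r, hr, fun K => min r (δ K), fun K hK => ⟨lt_min hr (hδ K hK), min_le_left _ _⟩,
    ball (γ 1) r ∩ {z | N z = 0}, isComplexAnalyticSubset_inter_setOf_eq_zero isOpen_ball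
      (hN.mono hball), fun hE => ?_, ?_⟩
  · refine not_eventuallyEq_stemNormSq_localStem hf hΩ hdom hzero hγ hI hJ hIJ ?_
    filter_upwards [ball_mem_nhds (γ 1) hr] with z hz
    have hz' : z ∈ ball (γ 1) r ∩ {z | N z = 0} := by rw [hE]; exact hz
    exact hz'.2
  · rintro K hK p ⟨⟨-, hp⟩, ⟨z, rfl⟩, hz⟩
    rw [(isometry_psi hK.1).dist_eq] at hz
    refine ⟨z, ⟨lt_of_lt_of_le hz (min_le_left _ _), ?_⟩, rfl⟩
    exact stemNormSq_eq_zero_of_evalStem_eq_zero hK.1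
      ((hδslice K hK z (lt_of_lt_of_le hz (min_le_right _ _))) ▸ hp)

end
end
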